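/- (Theorem 1, lower bound with event restriction.) Fix a horizon H and a time t ≤ H. Let Z_1, …, Z_{t-1}, X_t, A_t be random variables on a common probability space (Ω, 𝔉, P), each taking values in a finite set, and let E ∈ σ(Z_{1:t-1}, X_t) be an event of positive probability in the sigma-field generated by the history up to time t−1 and the observation at time t; write P_E for the probability measure P conditioned (restricted and normalized) to E. Suppose there exist K ∈ ℕ, a memory function g : {1,…,H} × 𝒵 × {1,…,K} → {1,…,K}, and memory states defined recursively by Y_0 = 1 and Y_j = g(j, Z_j, Y_{j-1}), such that the conditional distribution of A_t given (X_t, Z_{1:t-1}) under P equals almost surely that of A_t given (X_t, Y_{t-1}). Then for every k < t: I_E(A_t; Z_{1:k} | X_t, Z_{k+1:t-1}) ≤ log |Y_k(Ω)| ≤ log K, where I_E denotes conditional mutual information computed with respect to P_E and Y_k(Ω) is the set of values attained by the memory state Y_k. -/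

import Mathlib

open MeasureTheory ProbabilityTheory Real BigOperators

namespace MemoryLens

/-- Probability of an event as a real number. -/
noncomputable def pr {Ω : Type*} [MeasurableSpace Ω] (μ : Measure Ω) (s : Set Ω) : ℝ :=
  (μ s).toReal

/-- Conditional probability `P(s | t)` as a real number. -/
noncomputable def condProb {Ω : Type*} [MeasurableSpace Ω] (μ : Measure Ω) (s t : Set Ω) : ℝ :=
  pr μ (s ∩ t) / pr μ t

/-- Shannon entropy (in nats) of a finite-valued random variable. -/
noncomputable def entropy {Ω S : Type*} [MeasurableSpace Ω] [Fintype S]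
    (μ : Measure Ω) (X : Ω → S) : ℝ :=
  ∑ x : S, Real.negMulLog (pr μ {ω | X ω = x})

/-- Conditional entropy `H(X | W)` of finite-valued random variables. -/
noncomputable def condEntropy {Ω S T : Type*} [MeasurableSpace Ω] [Fintype S] [Fintype T]
    (μ : Measure Ω) (X : Ω → S) (W : Ω → T) : ℝ :=
  entropy μ (fun ω => (X ω, W ω)) - entropy μ W

/-- Conditional mutual information `I(A ; B | W)` of finite-valued random variables,
defined via the standard entropy decomposition. -/
noncomputable def condMI {Ω α β γ : Type*} [MeasurableSpace Ω] [Fintype α] [Fintype β] [Fintype γ]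
    (μ : Measure Ω) (A : Ω → α) (B : Ω → β) (W : Ω → γ) : ℝ :=
  entropy μ (fun ω => (A ω, W ω)) + entropy μ (fun ω => (B ω, W ω))
    - entropy μ (fun ω => (A ω, B ω, W ω)) - entropy μ W

/-- All fibers (level sets) of a random variable are measurable. -/
def MeasFibers {Ω α : Type*} [MeasurableSpace Ω] (A : Ω → α) : Prop :=
  ∀ a, MeasurableSet {ω | A ω = a}

/-- `memFold g y0 n (z_1, …, z_n)` is the memory state `Y_n` obtained by starting in `y0`
and applying the memory function `g` along observations `z_1, …, z_n`. -/
def memFold {𝒵 M : Type*} (g : ℕ → 𝒵 → M → M) (y0 : M) : (n : ℕ) → (Fin n → 𝒵) → M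
  | 0, _ => y0
  | n + 1, zs => g (n + 1) (zs (Fin.last n)) (memFold g y0 n (fun j => zs j.castSucc))

/-- The memory state `Y_n` as a random variable: the result of recursively updating the memory
via `g` along the observations `Z_1, …, Z_n`, starting from `Y_0 = y0`. -/
def memState {Ω 𝒵 M : Type*} (g : ℕ → 𝒵 → M → M) (Z : ℕ → Ω → 𝒵) (y0 : M) (n : ℕ) (ω : Ω) : M :=
  memFold g y0 n (fun j => Z (1 + (j : ℕ)) ω)

end MemoryLens


/-!
Conditioned on `E`, the action still depends on the history `(Z_{1:t-1}, X_t)` only through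
`(X_t, Y_{t-1})`: `E` is a union of fibres of the history, so on every fibre of positive
`P_E`-probability the conditional law of `A_t` is the same under `P_E` as under `P`. As `Y_{t-1}`
is determined by `Y_k` and `Z_{k+1:t-1}`, the conditional law of `A_t` given
`(Z_{1:k}, W)`, `W = (X_t, Z_{k+1:t-1})`, factors through `(Y_k, W)`, so that
`H(A_t | Z_{1:k}, W) = H(A_t | Y_k, W)`. Hence
`I_E(A_t; Z_{1:k} | W) = H(A_t | W) - H(A_t | Y_k, W) ≤ H(Y_k) ≤ log |Y_k(Ω)| ≤ log K`.
-/

namespace MemoryLens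

section Fibers

variable {Ω δ ε : Type*} [MeasurableSpace Ω]

lemma measurableSet_preimage_of_measFibers [Finite δ] {D : Ω → δ} (hD : MeasFibers D)
    (S : Set δ) : MeasurableSet (D ⁻¹' S) := by
  rw [← Set.biUnion_preimage_singleton]
  exact .biUnion S.to_countable fun d _ => hD d

lemma MeasFibers.comp [Finite δ] {D : Ω → δ} (hD : MeasFibers D) (f : δ → ε) :
    MeasFibers (fun ω => f (D ω)) :=
  fun e => measurableSet_preimage_of_measFibers hD (f ⁻¹' {e})

lemma MeasFibers.prodMk {A : Ω → ε} {D : Ω → δ} (hA : MeasFibers A) (hD : MeasFibers D) :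
    MeasFibers (fun ω => (A ω, D ω)) := fun p => by
  simpa only [Prod.ext_iff, Set.ofPred_and] using (hA p.1).inter (hD p.2)

lemma measFibers_pi {ι : Type*} [Countable ι] {Z : ι → Ω → ε} (hZ : ∀ i, MeasFibers (Z i)) :
    MeasFibers (fun ω i => Z i ω) := fun z => by
  simpa only [funext_iff, Set.ofPred_forall] using MeasurableSet.iInter fun i => hZ i (z i)

end Fibers

section Probability

variable {Ω δ ε : Type*} [MeasurableSpace Ω] (μ : Measure Ω)

lemma pr_nonneg (s : Set Ω) : 0 ≤ pr μ s := measureReal_nonneg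

lemma condProb_nonneg (s t : Set Ω) : 0 ≤ condProb μ s t :=
  div_nonneg (pr_nonneg μ _) (pr_nonneg μ _)

variable [IsFiniteMeasure μ]

lemma pr_eq_zero_of_subset {s t : Set Ω} (h : s ⊆ t) (ht : pr μ t = 0) : pr μ s = 0 :=
  le_antisymm (ht ▸ measureReal_mono h) (pr_nonneg μ s)

lemma pr_inter_eq_condProb_mul (s t : Set Ω) : pr μ (s ∩ t) = condProb μ s t * pr μ t := by
  by_cases ht : pr μ t = 0
  · simp [ht, pr_eq_zero_of_subset μ Set.inter_subset_right ht]
  · exact (div_mul_cancel₀ _ ht).symm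

lemma sum_pr_inter_fiber {D : Ω → δ} (hD : MeasFibers D) {s : Set Ω} (hs : MeasurableSet s)
    (F : Finset δ) : ∑ d ∈ F, pr μ (s ∩ {ω | D ω = d}) = pr μ (s ∩ {ω | D ω ∈ F}) := by
  have hunion : s ∩ {ω | D ω ∈ F} = ⋃ d ∈ F, s ∩ {ω | D ω = d} := by ext; simp
  rw [hunion]
  refine (measureReal_biUnion_finset (fun d _ d' _ hne => ?_) fun d _ => hs.inter (hD d)).symm
  exact Set.disjoint_left.2 fun ω h h' => hne (h.2.symm.trans h'.2)

lemma sum_pr_inter_fiber_univ [Fintype δ] {D : Ω → δ} (hD : MeasFibers D) {s : Set Ω}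
    (hs : MeasurableSet s) : ∑ d, pr μ (s ∩ {ω | D ω = d}) = pr μ s := by
  simp [sum_pr_inter_fiber μ hD hs]

lemma pr_inter_comp_fiber [Fintype δ] [DecidableEq ε] {D : Ω → δ} (hD : MeasFibers D)
    {s : Set Ω} (hs : MeasurableSet s) (f : δ → ε) (e : ε) :
    pr μ (s ∩ {ω | f (D ω) = e}) = ∑ d with f d = e, pr μ (s ∩ {ω | D ω = d}) := by
  rw [sum_pr_inter_fiber μ hD hs]
  simp

lemma pr_comp_fiber [Fintype δ] [DecidableEq ε] {D : Ω → δ} (hD : MeasFibers D)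
    (f : δ → ε) (e : ε) : pr μ {ω | f (D ω) = e} = ∑ d with f d = e, pr μ {ω | D ω = d} := by
  simpa using pr_inter_comp_fiber μ hD .univ f e

end Probability

section Conditioning

variable {Ω δ : Type*} [MeasurableSpace Ω] (μ : Measure Ω)

lemma condProb_cond_of_subset [IsFiniteMeasure μ] {E G : Set Ω} (hE : MeasurableSet E)
    (hμE : μ E ≠ 0) (hGE : G ⊆ E) (s : Set Ω) : condProb μ[|E] s G = condProb μ s G := by
  have hc : ((μ E)⁻¹).toReal ≠ 0 := ENNReal.toReal_ne_zero.2
    ⟨ENNReal.inv_ne_zero.2 (measure_ne_top μ E), ENNReal.inv_ne_top.2 hμE⟩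
  simp only [condProb, pr, cond_apply hE, ENNReal.toReal_mul,
    Set.inter_eq_right.2 hGE, Set.inter_eq_right.2 (Set.inter_subset_right.trans hGE)]
  exact mul_div_mul_left _ _ hc

lemma fiber_subset_of_pr_cond_ne_zero {D : Ω → δ} {S : Set δ} (hE : MeasurableSet (D ⁻¹' S))
    {d : δ} (h : pr μ[|D ⁻¹' S] {ω | D ω = d} ≠ 0) : {ω | D ω = d} ⊆ D ⁻¹' S := by
  by_cases hd : d ∈ S
  · rintro ω rfl
    exact hd
  · refine absurd ?_ h
    have hempty : D ⁻¹' S ∩ {ω | D ω = d} = ∅ := by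
      ext ω
      simp only [Set.mem_inter_iff, Set.mem_preimage, Set.mem_ofPred_eq, Set.mem_empty_iff_false,
        iff_false, not_and]
      rintro hω rfl
      exact hd hω
    simp [pr, cond_apply hE, hempty]

lemma measure_ne_zero_of_pr_cond_ne_zero {E G : Set Ω} (h : pr μ[|E] G ≠ 0) : μ G ≠ 0 :=
  fun h0 => h (by simp [pr, cond_absolutelyContinuous h0])

lemma condProb_cond_eq_of_condProb_eq [Finite δ] [IsFiniteMeasure μ] {D : Ω → δ}
    (hD : MeasFibers D) {E : Set Ω} {S : Set δ} (hES : E = D ⁻¹' S) (hμE : μ E ≠ 0)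
    {s : Set Ω} {d d' : δ} (hd : pr μ[|E] {ω | D ω = d} ≠ 0)
    (hd' : pr μ[|E] {ω | D ω = d'} ≠ 0)
    (h : μ {ω | D ω = d} ≠ 0 → μ {ω | D ω = d'} ≠ 0 →
      condProb μ s {ω | D ω = d} = condProb μ s {ω | D ω = d'}) :
    condProb μ[|E] s {ω | D ω = d} = condProb μ[|E] s {ω | D ω = d'} := by
  subst hES
  have hE := measurableSet_preimage_of_measFibers hD S
  rw [condProb_cond_of_subset μ hE hμE (fiber_subset_of_pr_cond_ne_zero μ hE hd),
    condProb_cond_of_subset μ hE hμE (fiber_subset_of_pr_cond_ne_zero μ hE hd')]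
  exact h (measure_ne_zero_of_pr_cond_ne_zero μ hd) (measure_ne_zero_of_pr_cond_ne_zero μ hd')

end Conditioning

lemma negMulLog_sum_le {ι : Type*} (F : Finset ι) (f : ι → ℝ) (hf : ∀ i ∈ F, 0 ≤ f i) :
    negMulLog (∑ i ∈ F, f i) ≤ ∑ i ∈ F, negMulLog (f i) := by
  rw [negMulLog, neg_mul, Finset.sum_mul, ← Finset.sum_neg_distrib]
  refine Finset.sum_le_sum fun i hi => ?_
  rcases (hf i hi).eq_or_lt with h0 | h0
  · simp [← h0]
  · have hlog : log (f i) ≤ log (∑ j ∈ F, f j) := log_le_log h0 (Finset.single_le_sum hf hi)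
    rw [negMulLog, neg_mul]
    nlinarith

lemma sum_negMulLog_le_log_card {ι : Type*} (F : Finset ι) (q : ι → ℝ) (hq : ∀ i ∈ F, 0 ≤ q i)
    (hsum : ∑ i ∈ F, q i = 1) : ∑ i ∈ F, negMulLog (q i) ≤ log F.card := by
  have hF : (0 : ℝ) < F.card := by
    rcases F.eq_empty_or_nonempty with rfl | hne
    · simp at hsum
    · exact_mod_cast hne.card_pos
  have hJ := concaveOn_negMulLog.le_map_sum (t := F) (w := fun _ => (F.card : ℝ)⁻¹) (p := q)
    (fun _ _ => by positivity) (by simp [hF.ne']) hq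
  have hnegMulLog_inv : negMulLog (F.card : ℝ)⁻¹ = (F.card : ℝ)⁻¹ * log F.card := by
    simp [negMulLog, log_inv]
  simp only [smul_eq_mul, ← Finset.mul_sum, hsum, mul_one, hnegMulLog_inv] at hJ
  exact le_of_mul_le_mul_left hJ (inv_pos.2 hF)

lemma log_ncard_range_le_log_card {Ω δ : Type*} [Finite δ] (Y : Ω → δ) :
    log (Set.range Y).ncard ≤ log (Nat.card δ) := by
  rcases Nat.eq_zero_or_pos (Set.range Y).ncard with h0 | hpos
  · simpa [h0] using log_natCast_nonneg _
  · exact log_le_log (by exact_mod_cast hpos) (by exact_mod_cast Set.ncard_le_card _)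

lemma condMI_eq_condEntropy_sub {Ω α β δ : Type*} [MeasurableSpace Ω] [Fintype α] [Fintype β]
    [Fintype δ] (ν : Measure Ω) (A : Ω → α) (B : Ω → β) (W : Ω → δ) :
    condMI ν A B W = condEntropy ν A W - condEntropy ν A (fun ω => (B ω, W ω)) := by
  rw [condMI, condEntropy, condEntropy]
  ring

section FiniteMeasure

variable {Ω α δ ε : Type*} [MeasurableSpace Ω] (ν : Measure Ω) [IsFiniteMeasure ν]

lemma entropy_comp_le [Fintype δ] [Fintype ε] {D : Ω → δ} (hD : MeasFibers D) (f : δ → ε) :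
    entropy ν (fun ω => f (D ω)) ≤ entropy ν D := by
  classical
  rw [entropy, entropy, ← Finset.sum_fiberwise Finset.univ f]
  refine Finset.sum_le_sum fun e _ => ?_
  rw [pr_comp_fiber ν hD f e]
  exact negMulLog_sum_le _ _ fun d _ => pr_nonneg ν _

lemma condEntropy_eq_sum [Fintype α] [Fintype δ] {A : Ω → α} {D : Ω → δ} (hA : MeasFibers A)
    (hD : MeasFibers D) (h : α → δ → ℝ)
    (hprop : ∀ a d, pr ν ({ω | A ω = a} ∩ {ω | D ω = d}) = h a d * pr ν {ω | D ω = d}) :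
    condEntropy ν A D = ∑ d, pr ν {ω | D ω = d} * ∑ a, negMulLog (h a d) := by
  have hpair : ∀ a d, {ω | (A ω, D ω) = (a, d)} = {ω | A ω = a} ∩ {ω | D ω = d} := by
    intro a d; ext ω; simp
  have hmass : ∀ d, (∑ a, h a d) * pr ν {ω | D ω = d} = pr ν {ω | D ω = d} := by
    intro d
    rw [Finset.sum_mul]
    refine (Finset.sum_congr rfl fun a _ => ?_).trans (sum_pr_inter_fiber_univ ν hA (hD d))
    rw [Set.inter_comm, hprop]
  have hinner : ∀ d, ∑ a, negMulLog (h a d * pr ν {ω | D ω = d})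
      = negMulLog (pr ν {ω | D ω = d}) + pr ν {ω | D ω = d} * ∑ a, negMulLog (h a d) := by
    intro d
    simp only [negMulLog_mul, Finset.sum_add_distrib, ← Finset.mul_sum, ← Finset.sum_mul]
    rcases eq_or_ne (pr ν {ω | D ω = d}) 0 with h0 | h0
    · simp [h0]
    · rw [mul_right_cancel₀ h0 ((hmass d).trans (one_mul _).symm)]
      ring
  rw [condEntropy, entropy, entropy, Fintype.sum_prod_type, Finset.sum_comm]
  simp only [hpair, hprop, hinner, Finset.sum_add_distrib]
  ring

lemma condEntropy_comp_eq_of_condProb_eq [Fintype α] [Fintype δ] [Fintype ε] {A : Ω → α}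
    {D : Ω → δ} (hA : MeasFibers A) (hD : MeasFibers D) (ψ : δ → ε)
    (hψ : ∀ a d d', ψ d = ψ d' → pr ν {ω | D ω = d} ≠ 0 → pr ν {ω | D ω = d'} ≠ 0 →
      condProb ν {ω | A ω = a} {ω | D ω = d} = condProb ν {ω | A ω = a} {ω | D ω = d'}) :
    condEntropy ν A (fun ω => ψ (D ω)) = condEntropy ν A D := by
  classical
  set c : α → ε → ℝ := fun a e => condProb ν {ω | A ω = a} {ω | ψ (D ω) = e}
  have hfactor : ∀ a d,
      pr ν ({ω | A ω = a} ∩ {ω | D ω = d}) = c a (ψ d) * pr ν {ω | D ω = d} := by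
    intro a d
    rcases eq_or_ne (pr ν {ω | D ω = d}) 0 with hd | hd
    · rw [hd, mul_zero]
      exact pr_eq_zero_of_subset ν Set.inter_subset_right hd
    set r := condProb ν {ω | A ω = a} {ω | D ω = d}
    have hfiber : ∀ d', ψ d' = ψ d →
        pr ν ({ω | A ω = a} ∩ {ω | D ω = d'}) = r * pr ν {ω | D ω = d'} := by
      intro d' hd'
      rcases eq_or_ne (pr ν {ω | D ω = d'}) 0 with h0 | h0
      · rw [h0, mul_zero]
        exact pr_eq_zero_of_subset ν Set.inter_subset_right h0
      · rw [pr_inter_eq_condProb_mul, hψ a d' d hd' h0 hd]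
    have hψd : pr ν {ω | ψ (D ω) = ψ d} ≠ 0 :=
      ne_of_gt (lt_of_lt_of_le ((pr_nonneg ν _).lt_of_ne' hd)
        (measureReal_mono fun ω (hω : D ω = d) => congrArg ψ hω))
    have hnum : pr ν ({ω | A ω = a} ∩ {ω | ψ (D ω) = ψ d}) = r * pr ν {ω | ψ (D ω) = ψ d} := by
      rw [pr_inter_comp_fiber ν hD (hA a), pr_comp_fiber ν hD, Finset.mul_sum]
      exact Finset.sum_congr rfl fun d' hd' => hfiber d' (Finset.mem_filter.1 hd').2
    have hc : c a (ψ d) = r := by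
      simp only [c, condProb]
      rw [hnum, mul_div_cancel_right₀ r hψd]
    rw [hc, hfiber d rfl]
  rw [condEntropy_eq_sum ν hA (hD.comp ψ) c fun a e => pr_inter_eq_condProb_mul ν _ _,
    condEntropy_eq_sum ν hA hD (fun a d => c a (ψ d)) hfactor,
    ← Finset.sum_fiberwise Finset.univ ψ]
  refine Finset.sum_congr rfl fun e _ => ?_
  rw [pr_comp_fiber ν hD ψ e, Finset.sum_mul]
  exact Finset.sum_congr rfl fun d hd => by rw [(Finset.mem_filter.1 hd).2]

lemma condEntropy_comp_eq_of_injective [Fintype α] [Fintype δ] [Fintype ε] {A : Ω → α}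
    {D : Ω → δ} (hA : MeasFibers A) (hD : MeasFibers D) {ψ : δ → ε}
    (hψ : Function.Injective ψ) : condEntropy ν A (fun ω => ψ (D ω)) = condEntropy ν A D :=
  condEntropy_comp_eq_of_condProb_eq ν hA hD ψ fun a d d' h _ _ => by rw [hψ h]

end FiniteMeasure

section ProbabilityMeasure

variable {Ω α β δ : Type*} [MeasurableSpace Ω] (ν : Measure Ω) [IsProbabilityMeasure ν]

lemma sum_pr_fiber [Fintype δ] {D : Ω → δ} (hD : MeasFibers D) :
    ∑ d, pr ν {ω | D ω = d} = 1 := by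
  simpa [pr] using sum_pr_inter_fiber_univ ν hD .univ

lemma entropy_le_log_ncard_range [Fintype δ] {Y : Ω → δ} (hY : MeasFibers Y) :
    entropy ν Y ≤ log (Set.range Y).ncard := by
  have hfin : (Set.range Y).Finite := Set.toFinite _
  have hzero : ∀ y ∉ hfin.toFinset, pr ν {ω | Y ω = y} = 0 := by
    intro y hy
    have hempty : {ω | Y ω = y} = ∅ :=
      Set.eq_empty_of_forall_notMem fun ω hω => hy (hfin.mem_toFinset.2 ⟨ω, hω⟩)
    simp [pr, hempty]
  have hsub := Finset.subset_univ hfin.toFinset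
  rw [Set.ncard_eq_toFinset_card _ hfin, entropy,
    ← Finset.sum_subset hsub fun y _ hy => by rw [hzero y hy, negMulLog_zero]]
  refine sum_negMulLog_le_log_card _ _ (fun y _ => pr_nonneg ν _) ?_
  rw [Finset.sum_subset hsub fun y _ hy => hzero y hy]
  exact sum_pr_fiber ν hY

lemma condEntropy_le_entropy [Fintype α] [Fintype δ] {A : Ω → α} {D : Ω → δ}
    (hA : MeasFibers A) (hD : MeasFibers D) : condEntropy ν A D ≤ entropy ν A := by
  rw [condEntropy_eq_sum ν hA hD _ fun a d => pr_inter_eq_condProb_mul ν _ _, entropy]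
  simp only [Finset.mul_sum]
  rw [Finset.sum_comm]
  refine Finset.sum_le_sum fun a _ => ?_
  have hJ := concaveOn_negMulLog.le_map_sum (t := Finset.univ) (w := fun d => pr ν {ω | D ω = d})
    (p := fun d => condProb ν {ω | A ω = a} {ω | D ω = d}) (fun d _ => pr_nonneg ν _)
    (sum_pr_fiber ν hD) (fun d _ => condProb_nonneg ν _ _)
  simp only [smul_eq_mul] at hJ
  convert hJ using 2
  rw [← sum_pr_inter_fiber_univ ν hD (hA a)]
  exact Finset.sum_congr rfl fun d _ => by rw [pr_inter_eq_condProb_mul, mul_comm]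

lemma condEntropy_le_condEntropy_prod_add_entropy [Fintype α] [Fintype β] [Fintype δ]
    {A : Ω → α} {Y : Ω → β} {W : Ω → δ} (hA : MeasFibers A) (hY : MeasFibers Y)
    (hW : MeasFibers W) :
    condEntropy ν A W ≤ condEntropy ν A (fun ω => (Y ω, W ω)) + entropy ν Y := by
  have hforget : entropy ν (fun ω => (A ω, W ω)) ≤ entropy ν (fun ω => (A ω, Y ω, W ω)) :=
    entropy_comp_le ν (hA.prodMk (hY.prodMk hW)) fun p => (p.1, p.2.2)
  have hYW := condEntropy_le_entropy ν hY hW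
  simp only [condEntropy] at hYW ⊢
  linarith

end ProbabilityMeasure

section Memory

variable {Ω α γ 𝒵 M : Type*} (g : ℕ → 𝒵 → M → M) (y0 : M)

lemma memFold_eq_of_take_eq {k m : ℕ} (hkm : k ≤ m) {zs zs' : Fin m → 𝒵}
    (htake : memFold g y0 k (Fin.take k hkm zs) = memFold g y0 k (Fin.take k hkm zs'))
    (hdrop : ∀ i : Fin m, k ≤ i → zs i = zs' i) : memFold g y0 m zs = memFold g y0 m zs' := by
  induction m with
  | zero => rfl
  | succ m ih =>
    rcases hkm.eq_or_lt with rfl | hlt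
    · exact htake
    · exact congrArg₂ (g (m + 1)) (hdrop _ (by simp; omega))
        (ih (Nat.le_of_lt_succ hlt) htake fun i hi => hdrop _ hi)

def splitHistory (k m : ℕ) (hkm : k ≤ m) (d : (Fin m → 𝒵) × γ) :
    (Fin k → 𝒵) × γ × (Fin (m - k) → 𝒵) :=
  (Fin.take k hkm d.1, d.2, fun j => d.1 ⟨k + j, by omega⟩)

lemma splitHistory_injective {k m : ℕ} (hkm : k ≤ m) :
    Function.Injective (splitHistory (𝒵 := 𝒵) (γ := γ) k m hkm) := by
  rintro ⟨zs, x⟩ ⟨zs', x'⟩ h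
  simp only [splitHistory, Prod.mk.injEq, funext_iff, Fin.take] at h
  obtain ⟨hfront, rfl, hback⟩ := h
  refine Prod.ext (funext fun i => ?_) rfl
  by_cases hi : (i : ℕ) < k
  · exact hfront ⟨i, hi⟩
  · simpa [Nat.add_sub_cancel' (not_lt.1 hi)] using hback ⟨i - k, by omega⟩

lemma splitHistory_history (Z : ℕ → Ω → 𝒵) (X : Ω → γ) (ω : Ω) {k m : ℕ} (hkm : k ≤ m) :
    splitHistory k m hkm ((fun j : Fin m => Z (1 + j) ω), X ω)
      = ((fun j : Fin k => Z (1 + j) ω), X ω, fun j : Fin (m - k) => Z (k + 1 + j) ω) :=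
  Prod.ext rfl (Prod.ext rfl (funext fun j => congrArg (Z · ω) (by simp; omega)))

lemma prodMap_splitHistory_history (Z : ℕ → Ω → 𝒵) (X : Ω → γ) (ω : Ω) {k m : ℕ}
    (hkm : k ≤ m) :
    Prod.map (memFold g y0 k) id (splitHistory k m hkm ((fun j : Fin m => Z (1 + j) ω), X ω))
      = (memState g Z y0 k ω, X ω, fun j : Fin (m - k) => Z (k + 1 + j) ω) := by
  rw [splitHistory_history]
  rfl

lemma memFold_eq_of_splitHistory_eq {k m : ℕ} (hkm : k ≤ m) {d d' : (Fin m → 𝒵) × γ}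
    (h : Prod.map (memFold g y0 k) id (splitHistory k m hkm d)
      = Prod.map (memFold g y0 k) id (splitHistory k m hkm d')) :
    (memFold g y0 m d.1, d.2) = (memFold g y0 m d'.1, d'.2) := by
  obtain ⟨zs, x⟩ := d
  obtain ⟨zs', x'⟩ := d'
  simp only [splitHistory, Prod.map, id, Prod.mk.injEq, funext_iff] at h
  obtain ⟨hfront, rfl, hback⟩ := h
  refine Prod.ext (memFold_eq_of_take_eq g y0 hkm hfront fun i hi => ?_) rfl
  simpa [Nat.add_sub_cancel' hi] using hback ⟨i - k, by omega⟩

lemma condProb_history_eq_of_memFold_eq [MeasurableSpace Ω] (μ : Measure Ω) (A : Ω → α)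
    (X : Ω → γ) (Z : ℕ → Ω → 𝒵) {m : ℕ}
    (hci : ∀ (a : α) (x : γ) (zs : Fin m → 𝒵),
      μ {ω | X ω = x ∧ (fun j : Fin m => Z (1 + (j : ℕ)) ω) = zs} ≠ 0 →
      condProb μ {ω | A ω = a} {ω | X ω = x ∧ (fun j : Fin m => Z (1 + (j : ℕ)) ω) = zs}
        = condProb μ {ω | A ω = a} {ω | X ω = x ∧ memState g Z y0 m ω = memFold g y0 m zs})
    (a : α) {d d' : (Fin m → 𝒵) × γ}
    (hdd' : (memFold g y0 m d.1, d.2) = (memFold g y0 m d'.1, d'.2)) :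
    μ {ω | ((fun j : Fin m => Z (1 + (j : ℕ)) ω), X ω) = d} ≠ 0 →
    μ {ω | ((fun j : Fin m => Z (1 + (j : ℕ)) ω), X ω) = d'} ≠ 0 →
    condProb μ {ω | A ω = a} {ω | ((fun j : Fin m => Z (1 + (j : ℕ)) ω), X ω) = d}
      = condProb μ {ω | A ω = a} {ω | ((fun j : Fin m => Z (1 + (j : ℕ)) ω), X ω) = d'} := by
  have hfiber : ∀ d : (Fin m → 𝒵) × γ,
      {ω | ((fun j : Fin m => Z (1 + (j : ℕ)) ω), X ω) = d}
        = {ω | X ω = d.2 ∧ (fun j : Fin m => Z (1 + (j : ℕ)) ω) = d.1} := by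
    intro d; ext ω; simp [Prod.ext_iff, and_comm]
  obtain ⟨hmem, hx⟩ := Prod.mk.inj hdd'
  simp only [hfiber]
  intro hd hd'
  rw [hci a _ _ hd, hci a _ _ hd', hmem, hx]

end Memory

end MemoryLens

open MemoryLens

theorem memory_lens_lower_bound_event_restriction_general
    {Ω α γ 𝒵 : Type*} [MeasurableSpace Ω]
    [Fintype α] [Fintype γ] [Fintype 𝒵]
    (μ : MeasureTheory.Measure Ω) [MeasureTheory.IsProbabilityMeasure μ]
    (t : ℕ)
    (A : Ω → α) (X : Ω → γ) (Z : ℕ → Ω → 𝒵)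
    (hA : MemoryLens.MeasFibers A) (hX : MemoryLens.MeasFibers X)
    (hZ : ∀ i, MemoryLens.MeasFibers (Z i))
    (K : ℕ) (hK : 0 < K) (g : ℕ → 𝒵 → Fin K → Fin K)
    (hci : ∀ (a : α) (x : γ) (zs : Fin (t - 1) → 𝒵),
      μ {ω | X ω = x ∧ (fun j : Fin (t - 1) => Z (1 + (j : ℕ)) ω) = zs} ≠ 0 →
      MemoryLens.condProb μ {ω | A ω = a}
          {ω | X ω = x ∧ (fun j : Fin (t - 1) => Z (1 + (j : ℕ)) ω) = zs}
        = MemoryLens.condProb μ {ω | A ω = a}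
          {ω | X ω = x ∧
            MemoryLens.memState g Z ⟨0, hK⟩ (t - 1) ω = MemoryLens.memFold g ⟨0, hK⟩ (t - 1) zs})
    (E : Set Ω)
    (hE : ∃ S : Set ((Fin (t - 1) → 𝒵) × γ),
      E = {ω | ((fun j : Fin (t - 1) => Z (1 + (j : ℕ)) ω), X ω) ∈ S})
    (hEpos : μ E ≠ 0) :
    ∀ k < t,
      MemoryLens.condMI (μ[|E]) A (fun ω => fun j : Fin k => Z (1 + (j : ℕ)) ω)
          (fun ω => (X ω, fun j : Fin (t - 1 - k) => Z (k + 1 + (j : ℕ)) ω))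
        ≤ Real.log ((Set.range (MemoryLens.memState g Z ⟨0, hK⟩ k)).ncard) ∧
      Real.log ((Set.range (MemoryLens.memState g Z ⟨0, hK⟩ k)).ncard) ≤ Real.log K := by
  obtain ⟨S, hES⟩ := hE
  intro k hk
  have hkm : k ≤ t - 1 := by omega
  have hD : MeasFibers fun ω => ((fun j : Fin (t - 1) => Z (1 + (j : ℕ)) ω), X ω) :=
    (measFibers_pi fun _ => hZ _).prodMk hX
  have : IsProbabilityMeasure μ[|E] := cond_isProbabilityMeasure hEpos
  have hY : MeasFibers (memState g Z ⟨0, hK⟩ k) := (measFibers_pi fun (_ : Fin k) => hZ _).comp _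
  have hW : MeasFibers fun ω => (X ω, fun j : Fin (t - 1 - k) => Z (k + 1 + (j : ℕ)) ω) :=
    hX.prodMk (measFibers_pi fun _ => hZ _)
  have hsplit := condEntropy_comp_eq_of_injective (μ[|E]) hA hD (splitHistory_injective hkm)
  have hmem := condEntropy_comp_eq_of_condProb_eq (μ[|E]) hA hD
    (Prod.map (memFold g ⟨0, hK⟩ k) id ∘ splitHistory k (t - 1) hkm)
    fun a d d' hdd' hd hd' => condProb_cond_eq_of_condProb_eq μ hD hES hEpos hd hd'
      (condProb_history_eq_of_memFold_eq g _ μ A X Z hci a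
        (memFold_eq_of_splitHistory_eq g _ hkm hdd'))
  simp only [splitHistory_history] at hsplit
  simp only [Function.comp_apply, prodMap_splitHistory_history] at hmem
  refine ⟨?_, by simpa using log_ncard_range_le_log_card (memState g Z ⟨0, hK⟩ k)⟩
  rw [condMI_eq_condEntropy_sub, hsplit, ← hmem]
  linarith [condEntropy_le_condEntropy_prod_add_entropy (μ[|E]) hA hY hW,
    entropy_le_log_ncard_range (μ[|E]) hY]

/-- Theorem 1: memory lower bound with event restriction. Let
`E ∈ σ(Z_{1:t-1}, X_t)` be an event of positive probability and `P_E` the measure `P`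
conditioned on `E`. If the action `A_t` is conditionally independent (under `P`) of the history
`Z_{1:t-1}` given `(X_t, Y_{t-1})`, where `Y_0 = 1`, `Y_j = g(j, Z_j, Y_{j-1})` for a memory
function `g` with capacity `K`, then for every `k < t`:
`I_E(A_t; Z_{1:k} | X_t, Z_{k+1:t-1}) ≤ log |Y_k(Ω)| ≤ log K`. -/
theorem memory_lens_lower_bound_event_restriction
    {Ω α γ 𝒵 : Type*} [MeasurableSpace Ω]
    [Fintype α] [Fintype γ] [Fintype 𝒵]
    (μ : MeasureTheory.Measure Ω) [MeasureTheory.IsProbabilityMeasure μ]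
    (H t : ℕ) (ht : t ≤ H) (ht1 : 1 ≤ t)
    (A : Ω → α) (X : Ω → γ) (Z : ℕ → Ω → 𝒵)
    (hA : MemoryLens.MeasFibers A) (hX : MemoryLens.MeasFibers X)
    (hZ : ∀ i, MemoryLens.MeasFibers (Z i))
    (K : ℕ) (hK : 0 < K) (g : ℕ → 𝒵 → Fin K → Fin K)
    (hci : ∀ (a : α) (x : γ) (zs : Fin (t - 1) → 𝒵),
      μ {ω | X ω = x ∧ (fun j : Fin (t - 1) => Z (1 + (j : ℕ)) ω) = zs} ≠ 0 →
      MemoryLens.condProb μ {ω | A ω = a}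
          {ω | X ω = x ∧ (fun j : Fin (t - 1) => Z (1 + (j : ℕ)) ω) = zs}
        = MemoryLens.condProb μ {ω | A ω = a}
          {ω | X ω = x ∧
            MemoryLens.memState g Z ⟨0, hK⟩ (t - 1) ω = MemoryLens.memFold g ⟨0, hK⟩ (t - 1) zs})
    (E : Set Ω)
    (hE : ∃ S : Set ((Fin (t - 1) → 𝒵) × γ),
      E = {ω | ((fun j : Fin (t - 1) => Z (1 + (j : ℕ)) ω), X ω) ∈ S})
    (hEpos : μ E ≠ 0) :
    ∀ k < t,
      MemoryLens.condMI (μ[|E]) A (fun ω => fun j : Fin k => Z (1 + (j : ℕ)) ω)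
          (fun ω => (X ω, fun j : Fin (t - 1 - k) => Z (k + 1 + (j : ℕ)) ω))
        ≤ Real.log ((Set.range (MemoryLens.memState g Z ⟨0, hK⟩ k)).ncard) ∧
      Real.log ((Set.range (MemoryLens.memState g Z ⟨0, hK⟩ k)).ncard) ≤ Real.log K :=
  memory_lens_lower_bound_event_restriction_general μ t A X Z hA hX hZ K hK g hci E hE hEpos
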